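/- In ℂ[s,t,x,y] the following two identities hold (equation (9) of the paper with a₆ = 1): c₁d₂ − i·c₂d₁ = (1−i)·(a₁a₂ − 4a₃), and c₁d₂ + i·c₂d₁ = (1+i)·b₁b₂. -/

import Mathlib

/-! With `u = s - x`, `v = t - y`, `p = st - xy`, `q = tx - ys` we have `c₁, d₁ = u ∓ i v` and
`c₂, d₂ = p ∓ i q`, so `i² = -1` alone turns the two combinations into `(1 - i)(u(p - q) + v(p + q))`
and `(1 + i)(u(p + q) - v(p - q))`. Since `p - q = (t + y) u` and `p + q = (s + x) v`, these are
`(1 - i)((t + y) u² + (s + x) v²) = (1 - i)(a₁a₂ - 4a₃)` and `(1 + i)(s + x - t - y) u v = (1 + i) b₁b₂`. -/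

noncomputable section
namespace Koike

open MvPolynomial

abbrev R4 : Type := MvPolynomial (Fin 4) ℂ

def s : R4 := X 0
def t : R4 := X 1
def x : R4 := X 2
def y : R4 := X 3

/-- the imaginary unit as a constant polynomial -/
def i : R4 := C Complex.I

def a1 : R4 := s + t + x + y
def a2 : R4 := s*t + t*x + x*y + y*s
def a3 : R4 := t*x*y + s*x*y + s*t*y + s*t*x
def a4 : R4 := s*x + t*y
def a5 : R4 := s*t*x*y
def a6 : R4 := 1

def b1 : R4 := s - t + x - y
def b2 : R4 := s*t - t*x + x*y - y*s
def b3 : R4 := t*x*y - s*x*y + s*t*y - s*t*x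
def b4 : R4 := s*x - t*y

def c1 : R4 := s - i*t - x + i*y
def c2 : R4 := s*t - i*(t*x) - x*y + i*(y*s)
def c3 : R4 := t*x*y - i*(s*x*y) - s*t*y + i*(s*t*x)

def d1 : R4 := s + i*t - x - i*y
def d2 : R4 := s*t + i*(t*x) - x*y - i*(y*s)
def d3 : R4 := t*x*y + i*(s*x*y) - s*t*y - i*(s*t*x)

/-- the pullback `σ* : ℂ[s,t,x,y] → ℂ[s,t,x,y]`, determined by
`s ↦ y, t ↦ s, x ↦ t, y ↦ x`. -/
def sigmaStar : R4 →ₐ[ℂ] R4 := aeval ![y, s, t, x]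

/-- the pullback `τ* : ℂ[s,t,x,y] → ℂ[s,t,x,y]`, determined by
`s ↦ x, t ↦ t, x ↦ s, y ↦ y`. -/
def tauStar : R4 →ₐ[ℂ] R4 := aeval ![x, t, s, y]

section GaussianProducts

variable {R : Type*} [CommRing R] {j : R}

theorem conj_mul_sub_mul_conj_mul (hj : j * j = -1) (u v p q : R) :
    (u - j * v) * (p + j * q) - j * ((p - j * q) * (u + j * v)) =
      (1 - j) * (u * (p - q) + v * (p + q)) := by
  linear_combination (q * u - p * v + (j - 1) * v * q) * hj

theorem conj_mul_add_mul_conj_mul (hj : j * j = -1) (u v p q : R) :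
    (u - j * v) * (p + j * q) + j * ((p - j * q) * (u + j * v)) =
      (1 + j) * (u * (p + q) - v * (p - q)) := by
  linear_combination (p * v - q * u - (j + 1) * v * q) * hj

end GaussianProducts

theorem i_mul_i : i * i = -1 := by
  rw [i, ← map_mul, Complex.I_mul_I, map_neg, map_one]

theorem c1_eq : c1 = (s - x) - i * (t - y) := by unfold c1; ring

theorem d1_eq : d1 = (s - x) + i * (t - y) := by unfold d1; ring

theorem c2_eq : c2 = (s * t - x * y) - i * (t * x - y * s) := by unfold c2; ring

theorem d2_eq : d2 = (s * t - x * y) + i * (t * x - y * s) := by unfold d2; ring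

/-- `c₁d₂ − i c₂d₁ = (1−i)(a₁a₂ − 4a₃)` and `c₁d₂ + i c₂d₁ = (1+i) b₁b₂`
(with `a₆ = 1`). -/
theorem stmt_13 :
    c1*d2 - i * (c2*d1) = (1 - i) * (a1*a2 - 4*a3) ∧
    c1*d2 + i * (c2*d1) = (1 + i) * (b1*b2) := by
  rw [c1_eq, d1_eq, c2_eq, d2_eq, conj_mul_sub_mul_conj_mul i_mul_i,
    conj_mul_add_mul_conj_mul i_mul_i]
  constructor
  · unfold a1 a2 a3; ring
  · unfold b1 b2; ring

end Koike
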